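/- arXiv:1502.05148 — 2 statements merged into one kernel-verified Lean document; each statement's English description precedes it below -/
import Mathlib

section
/- For every ψ ∈ Γ, the function ψ*(x) := ⟨(1-x)^{-⊗1} ∣ ψ⟩ is analytic on the open unit ball B of E, and its n-th Taylor coefficient at zero equals the n-homogeneous Hilbert-Schmidt polynomial x ↦ ⟨x^{⊗n} ∣ ψ_n⟩, where ψ = ⊕_n ψ_n with ψ_n ∈ E^{⊙n}. -/
/-!
Polarization turns the diagonal map `x ↦ x^{⊗n}` into an `n`-linear map `Vₙ` with
`Vₙ (x, …, x) = x^{⊗n}`; its Gram identity `⟪Vₙ x, Vₙ y⟫ = (n!)⁻¹ ∑_σ ∏ⱼ ⟪x (σ j), y j⟫`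
gives `‖Vₙ‖ ≤ 1`. Hence `pₙ := ⟪ψₙ, Vₙ ·⟫` is a formal power series with `‖pₙ‖ ≤ ‖ψ‖`, so of
radius at least `1`, and on the unit ball its sum is `∑ₙ ⟪ψₙ, x^{⊗n}⟫ = ⟪ψ, (1-x)^{-⊗1}⟫`.
The Taylor coefficients of a power series at its centre are its terms.
-/

open scoped Nat
/-- A model of the completed `n`-th *symmetric* tensor power `E^{⊙n}` of a complex
inner product space `E`: a space `T` with a map `tpow : x ↦ x^{⊗n}` satisfying
`⟨x^{⊗n}, y^{⊗n}⟩ = ⟨x,y⟩ⁿ`, the diagonal tensors being total in `T`. -/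
structure SymPowModel (E : Type) [NormedAddCommGroup E] [InnerProductSpace ℂ E]
    (n : ℕ) (T : Type) [NormedAddCommGroup T] [InnerProductSpace ℂ T] where
  tpow : E → T
  inner_tpow : ∀ x y : E, (inner ℂ (tpow x) (tpow y) : ℂ) = (inner ℂ x y : ℂ) ^ n
  total : (Submodule.span ℂ (Set.range tpow)).topologicalClosure = ⊤

open Finset

namespace Polarization

variable {R : Type*} [CommRing R] {n : ℕ}

def sign (b : Bool) : R := if b then 1 else -1

theorem star_sign [StarRing R] (b : Bool) : star (sign b : R) = sign b := by
  cases b <;> simp [sign]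

theorem sum_sign : ∑ b : Bool, (sign b : R) = 0 := by
  simp [sign]

theorem sum_sign_sq : ∑ b : Bool, (sign b : R) ^ 2 = 2 := by
  simp [sign, one_add_one_eq_two]

theorem sum_prod_sign_mul_prod_sign_comp (r : Fin n → Fin n) :
    ∑ ε : Fin n → Bool, (∏ j, (sign (ε j) : R)) * ∏ j, sign (ε (r j)) =
      if Function.Bijective r then 2 ^ n else 0 := by
  classical
  have hfiber (ε : Fin n → Bool) :
      (∏ j, (sign (ε j) : R)) * ∏ j, sign (ε (r j)) =
        ∏ j, sign (ε j) ^ (#{i | r i = j} + 1) := by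
    rw [← prod_fiberwise univ r fun i => (sign (ε (r i)) : R), ← prod_mul_distrib]
    refine prod_congr rfl fun j _ => ?_
    rw [prod_eq_pow_card fun i hi => by rw [(mem_filter.mp hi).2], pow_succ']
  simp_rw [hfiber]
  rw [← Fintype.prod_sum (fun j b => (sign b : R) ^ (#{i | r i = j} + 1))]
  -- The factor at `j` is `2` if the fibre of `r` over `j` is a singleton, `0` if it is empty.
  split_ifs with hr
  · have hcard (j : Fin n) : #{i | r i = j} = 1 := by
      obtain ⟨i, hi, huniq⟩ := hr.existsUnique j
      exact card_eq_one.mpr ⟨i, by ext i'; simpa using ⟨huniq i', fun h => h ▸ hi⟩⟩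
    simp only [hcard, Nat.reduceAdd, sum_sign_sq, prod_const, card_univ,
      Fintype.card_fin]
  · obtain ⟨j, hj⟩ : ∃ j, ∀ i, r i ≠ j := by
      simpa [Function.Surjective] using mt Finite.surjective_iff_bijective.mp hr
    refine prod_eq_zero (mem_univ j) ?_
    simp only [filter_eq_empty_iff.mpr fun i _ => hj i, card_empty, zero_add, pow_one,
      sum_sign]

theorem sum_ite_bijective_eq_sum_perm {M : Type*} [AddCommMonoid M] (X : (Fin n → Fin n) → M) :
    ∑ r : Fin n → Fin n, (if Function.Bijective r then X r else 0) =
      ∑ σ : Equiv.Perm (Fin n), X σ := by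
  rw [← sum_filter, sum_subtype _ (p := Function.Bijective) fun r => by simp]
  exact Fintype.sum_equiv Equiv.bijectiveEquiv _ _ fun _ => rfl

theorem sum_prod_sign_mul_prod_sum (A : Fin n → Fin n → R) :
    ∑ ε : Fin n → Bool, (∏ j, (sign (ε j) : R)) * ∏ j, ∑ k, sign (ε k) * A k j =
      2 ^ n * ∑ σ : Equiv.Perm (Fin n), ∏ j, A (σ j) j := by
  have hexpand (ε : Fin n → Bool) :
      (∏ j, (sign (ε j) : R)) * ∏ j, ∑ k, sign (ε k) * A k j =
        ∑ r : Fin n → Fin n, (∏ j, A (r j) j) * ((∏ j, sign (ε j)) * ∏ j, sign (ε (r j))) := by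
    rw [Fintype.prod_sum, mul_sum]
    refine sum_congr rfl fun r _ => ?_
    rw [prod_mul_distrib]
    ring
  simp_rw [hexpand]
  rw [sum_comm]
  simp_rw [← mul_sum, sum_prod_sign_mul_prod_sign_comp, mul_ite, mul_zero,
    sum_ite_bijective_eq_sum_perm, mul_sum, mul_comm]

theorem sum_prod_sign_mul_sum_pow (a : Fin n → R) :
    ∑ ε : Fin n → Bool, (∏ j, (sign (ε j) : R)) * (∑ k, sign (ε k) * a k) ^ n =
      2 ^ n * n ! * ∏ j, a j := by
  have h := sum_prod_sign_mul_prod_sum fun k (_ : Fin n) => a k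
  simp only [prod_const, card_univ, Fintype.card_fin] at h
  simp_rw [h, Equiv.prod_comp, sum_const, card_univ, Fintype.card_perm,
    Fintype.card_fin, nsmul_eq_mul, mul_assoc]

end Polarization

open scoped InnerProductSpace

namespace SymPowModel

open Polarization

variable {E T : Type} [NormedAddCommGroup E] [InnerProductSpace ℂ E]
  [NormedAddCommGroup T] [InnerProductSpace ℂ T] {n : ℕ} (M : SymPowModel E n T)

theorem ext_inner_tpow {v w : T} (h : ∀ y, ⟪M.tpow y, v⟫_ℂ = ⟪M.tpow y, w⟫_ℂ) : v = w := by
  have hspan : Submodule.span ℂ (Set.range M.tpow) ≤ (innerSL ℂ (v - w)).ker := by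
    rw [Submodule.span_le]
    rintro _ ⟨y, rfl⟩
    show ⟪v - w, M.tpow y⟫_ℂ = 0
    rw [inner_sub_left, sub_eq_zero, ← inner_conj_symm, h, inner_conj_symm]
  have hclosure := Submodule.topologicalClosure_minimal _ hspan (innerSL ℂ (v - w)).isClosed_ker
  rw [M.total] at hclosure
  have hself : ⟪v - w, v - w⟫_ℂ = 0 := hclosure Submodule.mem_top
  exact sub_eq_zero.mp (inner_self_eq_zero.mp hself)

/-- The symmetric tensor `x₁ ⊙ ⋯ ⊙ xₙ`. -/
noncomputable def polarize (x : Fin n → E) : T :=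
  ((2 : ℂ) ^ n * n !)⁻¹ •
    ∑ ε : Fin n → Bool, (∏ j, (sign (ε j) : ℂ)) • M.tpow (∑ j, (sign (ε j) : ℂ) • x j)

theorem inner_tpow_polarize (y : E) (x : Fin n → E) :
    ⟪M.tpow y, M.polarize x⟫_ℂ = ∏ j, ⟪y, x j⟫_ℂ := by
  simp only [polarize, inner_smul_right, inner_sum, M.inner_tpow]
  rw [sum_prod_sign_mul_sum_pow, inv_mul_cancel_left₀ (by simp [Nat.factorial_ne_zero])]

theorem polarize_const (x : E) : M.polarize (fun _ => x) = M.tpow x :=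
  M.ext_inner_tpow fun y => by simp [inner_tpow_polarize, M.inner_tpow]

theorem inner_polarize_polarize (x y : Fin n → E) :
    ⟪M.polarize x, M.polarize y⟫_ℂ =
      (n ! : ℂ)⁻¹ * ∑ σ : Equiv.Perm (Fin n), ∏ j, ⟪x (σ j), y j⟫_ℂ := by
  rw [polarize, inner_smul_left, sum_inner]
  simp only [inner_smul_left, inner_tpow_polarize, sum_inner, map_prod, starRingEnd_apply,
    star_sign]
  rw [sum_prod_sign_mul_prod_sum]
  simp only [mul_inv_rev, star_mul', star_inv₀, star_natCast, star_pow, star_ofNat]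
  field_simp

theorem norm_polarize_le (x : Fin n → E) : ‖M.polarize x‖ ≤ ∏ j, ‖x j‖ := by
  have hsq : ‖M.polarize x‖ ^ 2 ≤ (∏ j, ‖x j‖) ^ 2 :=
    calc ‖M.polarize x‖ ^ 2 = ‖⟪M.polarize x, M.polarize x⟫_ℂ‖ := by
          simp [inner_self_eq_norm_sq_to_K]
      _ ≤ (n ! : ℝ)⁻¹ * ∑ σ : Equiv.Perm (Fin n), ∏ j, ‖x (σ j)‖ * ‖x j‖ := by
          rw [inner_polarize_polarize, norm_mul, norm_inv, Complex.norm_natCast]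
          gcongr
          refine (norm_sum_le _ _).trans (sum_le_sum fun σ _ => ?_)
          rw [norm_prod]
          exact prod_le_prod (fun j _ => norm_nonneg _) fun j _ => norm_inner_le_norm _ _
      _ = (∏ j, ‖x j‖) ^ 2 := by
          have hterm (σ : Equiv.Perm (Fin n)) : ∏ j, ‖x (σ j)‖ * ‖x j‖ = (∏ j, ‖x j‖) ^ 2 := by
            rw [prod_mul_distrib, Equiv.prod_comp σ fun j => ‖x j‖, sq]
          simp only [hterm, sum_const, card_univ, Fintype.card_perm,
            Fintype.card_fin, nsmul_eq_mul]
          field_simp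
  exact (pow_le_pow_iff_left₀ (norm_nonneg _) (by positivity) two_ne_zero).mp hsq

noncomputable def polarization : ContinuousMultilinearMap ℂ (fun _ : Fin n => E) T :=
  MultilinearMap.mkContinuous
    { toFun := M.polarize
      map_update_add' := fun x i u v => M.ext_inner_tpow fun y => by
        simp only [inner_add_right, inner_tpow_polarize]
        exact
          ((MultilinearMap.mkPiAlgebra ℂ (Fin n) ℂ).compLinearMap
            fun _ => innerₛₗ ℂ y).map_update_add x i u v
      map_update_smul' := fun x i a u => M.ext_inner_tpow fun y => by
        simp only [inner_smul_right, inner_tpow_polarize]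
        exact
          ((MultilinearMap.mkPiAlgebra ℂ (Fin n) ℂ).compLinearMap
            fun _ => innerₛₗ ℂ y).map_update_smul x i a u }
    1 fun x => (M.norm_polarize_le x).trans_eq (one_mul _).symm

theorem polarization_const (x : E) : M.polarization (fun _ => x) = M.tpow x :=
  M.polarize_const x

theorem norm_polarization_le : ‖M.polarization‖ ≤ 1 :=
  MultilinearMap.mkContinuous_norm_le _ zero_le_one _

end SymPowModel

theorem Metric.eball_one {α : Type*} [PseudoMetricSpace α] (x : α) :
    Metric.eball x 1 = Metric.ball x 1 := by
  rw [← ENNReal.ofReal_one, Metric.eball_ofReal]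

section FockSpace

variable {E : Type} [NormedAddCommGroup E] [InnerProductSpace ℂ E]
  {T : ℕ → Type} [∀ n, NormedAddCommGroup (T n)] [∀ n, InnerProductSpace ℂ (T n)]
  (M : ∀ n, SymPowModel E n (T n)) (ψ : lp T 2)

noncomputable def fockTaylorSeries : FormalMultilinearSeries ℂ E ℂ :=
  fun n => (innerSL ℂ (ψ n)).compContinuousMultilinearMap (M n).polarization

theorem fockTaylorSeries_apply_const (n : ℕ) (x : E) :
    fockTaylorSeries M ψ n (fun _ => x) = ⟪ψ n, (M n).tpow x⟫_ℂ := by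
  simp [fockTaylorSeries, SymPowModel.polarization_const]

theorem norm_fockTaylorSeries_le (n : ℕ) : ‖fockTaylorSeries M ψ n‖ ≤ ‖ψ‖ :=
  calc ‖fockTaylorSeries M ψ n‖ ≤ ‖innerSL ℂ (ψ n)‖ * ‖(M n).polarization‖ :=
        ContinuousLinearMap.norm_compContinuousMultilinearMap_le _ _
    _ ≤ ‖ψ n‖ * 1 := by
        rw [innerSL_apply_norm]
        gcongr
        exact (M n).norm_polarization_le
    _ ≤ ‖ψ‖ := by
        rw [mul_one]
        exact lp.norm_apply_le_norm two_ne_zero ψ n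

theorem one_le_radius_fockTaylorSeries : 1 ≤ (fockTaylorSeries M ψ).radius := by
  refine ENNReal.le_of_forall_nnreal_lt fun r hr =>
    (fockTaylorSeries M ψ).le_radius_of_bound ‖ψ‖ fun n => ?_
  have hr1 : (r : ℝ) ≤ 1 := by exact_mod_cast hr.le
  calc ‖fockTaylorSeries M ψ n‖ * (r : ℝ) ^ n ≤ ‖ψ‖ * 1 :=
        mul_le_mul (norm_fockTaylorSeries_le M ψ n) (pow_le_one₀ r.coe_nonneg hr1)
          (by positivity) (norm_nonneg _)
    _ = ‖ψ‖ := mul_one _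

theorem hasFPowerSeriesOnBall_inner_fock (c : E → lp T 2)
    (hc : ∀ x : E, ‖x‖ < 1 → ∀ n, c x n = (M n).tpow x) :
    HasFPowerSeriesOnBall (fun x => ⟪ψ, c x⟫_ℂ) (fockTaylorSeries M ψ) 0 1 where
  r_le := one_le_radius_fockTaylorSeries M ψ
  r_pos := one_pos
  hasSum {y} hy := by
    have hy1 : ‖y‖ < 1 := by rwa [Metric.eball_one, mem_ball_zero_iff] at hy
    simpa [fockTaylorSeries_apply_const, hc y hy1] using lp.hasSum_inner ψ (c y)

end FockSpace

-- The paper's `⟨a ∣ b⟩` is Mathlib's `inner ℂ b a`.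
theorem fock_function_analytic_taylor_general (E : Type) [NormedAddCommGroup E]
    [InnerProductSpace ℂ E]
    (T : ℕ → Type) [∀ n, NormedAddCommGroup (T n)] [∀ n, InnerProductSpace ℂ (T n)]
    (M : ∀ n, SymPowModel E n (T n))
    (c : E → lp T 2) (hc : ∀ x : E, ‖x‖ < 1 → ∀ n, c x n = (M n).tpow x)
    (ψ : lp T 2) :
    AnalyticOnNhd ℂ (fun x : E => (inner ℂ ψ (c x) : ℂ)) (Metric.ball (0 : E) 1) ∧
      ∀ n : ℕ, ∀ x : E,
        ((n ! : ℂ))⁻¹ *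
            iteratedFDeriv ℂ n (fun x : E => (inner ℂ ψ (c x) : ℂ)) 0 (fun _ => x) =
          (inner ℂ (ψ n) ((M n).tpow x) : ℂ) := by
  have hψ := hasFPowerSeriesOnBall_inner_fock M ψ c hc
  refine ⟨?_, fun n x => ?_⟩
  · simpa only [Metric.eball_one] using hψ.analyticOnNhd
  · rw [← hψ.factorial_smul, fockTaylorSeries_apply_const, nsmul_eq_mul,
      inv_mul_cancel_left₀ (by simp [Nat.factorial_ne_zero])]

/-- for `ψ ∈ Γ`, the function `ψ*(x) = ⟨(1-x)^{-⊗1} ∣ ψ⟩` is analytic on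
the open unit ball and its `n`-th Taylor coefficient at `0` is the `n`-homogeneous
Hilbert-Schmidt polynomial `x ↦ ⟨x^{⊗n} ∣ ψₙ⟩` (paper's `⟨a∣b⟩` is Mathlib's `inner b a`). -/
theorem fock_function_analytic_taylor (E : Type) [NormedAddCommGroup E]
    [InnerProductSpace ℂ E] [CompleteSpace E]
    (T : ℕ → Type) [∀ n, NormedAddCommGroup (T n)] [∀ n, InnerProductSpace ℂ (T n)]
    [∀ n, CompleteSpace (T n)]
    (M : ∀ n, SymPowModel E n (T n))
    (c : E → lp T 2) (hc : ∀ x : E, ‖x‖ < 1 → ∀ n, c x n = (M n).tpow x)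
    (ψ : lp T 2) :
    AnalyticOnNhd ℂ (fun x : E => (inner ℂ ψ (c x) : ℂ)) (Metric.ball (0 : E) 1) ∧
      ∀ n : ℕ, ∀ x : E,
        ((n ! : ℂ))⁻¹ *
            iteratedFDeriv ℂ n (fun x : E => (inner ℂ ψ (c x) : ℂ)) 0 (fun _ => x) =
          (inner ℂ (ψ n) ((M n).tpow x) : ℂ) :=
  fock_function_analytic_taylor_general E T M c hc ψ
end

section
/- Let χ_m be the Haar probability measure on U(m) and for ψ ∈ (ℂ^m)^{⊙n} put ψ_ζ(u) = ⟨(u e_1)^{⊗n} ∣ ψ⟩. Then for all ψ, φ ∈ (ℂ^m)^{⊙n}: C(n+m-1, n) · ∫_{U(m)} φ_ζ(u) · conj(ψ_ζ(u)) dχ_m(u) = ⟨ψ ∣ φ⟩. -/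
open MeasureTheory

/-!
Write `ν` for the law of `u e₁` under the Haar measure: a probability measure on the unit sphere
invariant under every unitary map. Expanding `⟪y, z⟫ⁿ ⟪z, x⟫ⁿ` in monomials, the kernel
`∫ ⟪y, z⟫ⁿ ⟪z, x⟫ⁿ dν` is a combination of the mixed moments `∫ z^α conj (z^β) dν`. Invariance
under diagonal phases kills the moments with `α ≠ β`. Transitivity on the sphere makes
`∫ |⟪x, z⟫|²ⁿ dν = c ‖x‖²ⁿ`, and both sides are polynomials in `|x₁|², …, |xₘ|²`; comparing
coefficients gives `multinomial α * ∫ |z^α|² dν = c` for every `α`, so the kernel is `c ⟪y, x⟫ⁿ`,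
while `∫ ‖z‖²ⁿ dν = 1` forces `c * C(n+m-1, n) = 1`. This is the formula for `ψ, φ` of the form
`x^{⊗n}`, and it extends to all of `T` because both sides are continuous sesquilinear forms and
such tensors are total.
-/

open Finset Module
open scoped ComplexInnerProductSpace ComplexConjugate

namespace SymPowModel

variable {E T : Type} [NormedAddCommGroup E] [InnerProductSpace ℂ E]
  [NormedAddCommGroup T] [InnerProductSpace ℂ T] {n : ℕ} (M : SymPowModel E n T)

theorem norm_tpow (x : E) : ‖M.tpow x‖ = ‖x‖ ^ n := by
  have h := M.inner_tpow x x
  rw [inner_self_eq_norm_sq_to_K, inner_self_eq_norm_sq_to_K] at h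
  refine (pow_left_inj₀ (norm_nonneg _) (by positivity) two_ne_zero).1 ?_
  rw [← pow_mul, mul_comm, pow_mul]
  exact_mod_cast h

theorem norm_tpow_sub_sq (x y : E) :
    ‖M.tpow y - M.tpow x‖ ^ 2 = ‖y‖ ^ (2 * n) - 2 * (⟪y, x⟫ ^ n).re + ‖x‖ ^ (2 * n) := by
  rw [@norm_sub_sq ℂ, M.inner_tpow, norm_tpow, norm_tpow, RCLike.re_to_complex, pow_mul',
    pow_mul']

theorem continuous_tpow : Continuous M.tpow := by
  refine continuous_iff_continuousAt.2 fun x => tendsto_iff_norm_sub_tendsto_zero.2 ?_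
  have hsq : Filter.Tendsto (fun y => ‖M.tpow y - M.tpow x‖ ^ 2) (nhds x) (nhds 0) := by
    simp_rw [norm_tpow_sub_sq]
    have hc : Continuous fun y : E => ‖y‖ ^ (2 * n) - 2 * (⟪y, x⟫ ^ n).re + ‖x‖ ^ (2 * n) := by
      fun_prop
    convert hc.tendsto x using 2
    rw [← M.norm_tpow_sub_sq x x, sub_self, norm_zero, zero_pow two_ne_zero]
  simpa using hsq.sqrt

theorem continuousLinearMap_ext {f g : T →L[ℂ] ℂ} (h : ∀ x, f (M.tpow x) = g (M.tpow x)) :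
    f = g :=
  ContinuousLinearMap.ext_on (Submodule.dense_iff_topologicalClosure_eq_top.2 M.total)
    (Set.forall_mem_range.2 h)

variable [MeasurableSpace E] [OpensMeasurableSpace E] [SecondCountableTopology E]

/-- Integrating in the Banach space `T →L[ℂ] ℂ` (`T` need not be complete) makes the form
`(a, b) ↦ ∫ ⟪a, z^{⊗n}⟫ ⟪z^{⊗n}, b⟫ dν` continuous and linear in `b` for free. -/
noncomputable def averagedInner (ν : Measure E) (a : T) : T →L[ℂ] ℂ :=
  ∫ z, ⟪a, M.tpow z⟫ • innerSL ℂ (M.tpow z) ∂ν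

variable {ν : Measure E} [IsFiniteMeasure ν]

theorem integrable_inner_smul_innerSL (hν : ∀ᵐ z ∂ν, ‖z‖ = 1) (a : T) :
    Integrable (fun z => ⟪a, M.tpow z⟫ • innerSL ℂ (M.tpow z)) ν := by
  have hc : Continuous fun z => ⟪a, M.tpow z⟫ • innerSL ℂ (M.tpow z) := by
    have := M.continuous_tpow
    fun_prop
  refine (integrable_const ‖a‖).mono' hc.aestronglyMeasurable ?_
  filter_upwards [hν] with z hz
  have hw : ‖M.tpow z‖ = 1 := by rw [norm_tpow, hz, one_pow]
  calc ‖⟪a, M.tpow z⟫ • innerSL ℂ (M.tpow z)‖ ≤ ‖a‖ * ‖M.tpow z‖ * ‖M.tpow z‖ := by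
        rw [norm_smul, innerSL_apply_norm]
        gcongr
        exact norm_inner_le_norm a _
    _ = ‖a‖ := by rw [hw, mul_one, mul_one]

theorem averagedInner_apply (hν : ∀ᵐ z ∂ν, ‖z‖ = 1) (a b : T) :
    M.averagedInner ν a b = ∫ z, ⟪a, M.tpow z⟫ * ⟪M.tpow z, b⟫ ∂ν := by
  rw [averagedInner, ContinuousLinearMap.integral_apply (M.integrable_inner_smul_innerSL hν a)]
  rfl

theorem conj_averagedInner_apply (hν : ∀ᵐ z ∂ν, ‖z‖ = 1) (a b : T) :
    conj (M.averagedInner ν a b) = M.averagedInner ν b a := by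
  rw [averagedInner_apply M hν, averagedInner_apply M hν, ← integral_conj]
  congr 1 with z
  rw [map_mul, inner_conj_symm, inner_conj_symm, mul_comm]

theorem mul_integral_inner_tpow_mul_inner_tpow_eq_inner (hν : ∀ᵐ z ∂ν, ‖z‖ = 1) {c : ℝ}
    (h : ∀ x y : E, c * ∫ z, ⟪y, z⟫ ^ n * ⟪z, x⟫ ^ n ∂ν = ⟪y, x⟫ ^ n) (a b : T) :
    c * ∫ z, ⟪a, M.tpow z⟫ * ⟪M.tpow z, b⟫ ∂ν = ⟪a, b⟫ := by
  have h_tpow : ∀ y, (c : ℂ) • M.averagedInner ν (M.tpow y) = innerSL ℂ (M.tpow y) := by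
    intro y
    refine M.continuousLinearMap_ext fun x => ?_
    simp only [smul_apply, averagedInner_apply M hν, M.inner_tpow, innerSL_apply_apply,
      smul_eq_mul, h]
  have h_all : ∀ b, (c : ℂ) • M.averagedInner ν b = innerSL ℂ b := by
    intro b
    refine M.continuousLinearMap_ext fun y => ?_
    have hy := congrArg (fun f => conj (f b)) (h_tpow y)
    simp only [smul_apply, smul_eq_mul, map_mul, Complex.conj_ofReal,
      conj_averagedInner_apply M hν, innerSL_apply_apply, inner_conj_symm] at hy
    simpa using hy
  simpa [averagedInner_apply M hν] using congrArg (fun f => f b) (h_all a)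

end SymPowModel

theorem eq_zero_of_sum_mul_prod_natCast_pow_eq_zero {ι R : Type*} [Fintype ι] [CommRing R]
    [IsDomain R] [CharZero R] {s : Finset (ι → ℕ)} {q : (ι → ℕ) → R}
    (h : ∀ r : ι → ℕ, ∑ α ∈ s, q α * ∏ i, (r i : R) ^ α i = 0) {α : ι → ℕ} (hα : α ∈ s) :
    q α = 0 := by
  classical
  set P : MvPolynomial ι R :=
    ∑ β ∈ s, MvPolynomial.monomial (Finsupp.equivFunOnFinite.symm β) (q β)
  have hP : P = 0 := by
    refine MvPolynomial.funext_set (fun _ => Set.range ((↑) : ℕ → R))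
      (fun _ => Set.infinite_range_of_injective Nat.cast_injective) fun x hx => ?_
    choose r hr using fun i => hx i (Set.mem_univ i)
    simp only [P, map_sum, MvPolynomial.eval_monomial, map_zero,
      Finsupp.prod_fintype _ _ (fun i => pow_zero (x i))]
    simpa [← hr] using h r
  simpa [P, MvPolynomial.coeff_sum, MvPolynomial.coeff_monomial, hα] using
    congrArg (MvPolynomial.coeff (Finsupp.equivFunOnFinite.symm α)) hP

section Transitivity

variable {𝕜 E : Type*} [RCLike 𝕜] [NormedAddCommGroup E] [InnerProductSpace 𝕜 E]
  [FiniteDimensional 𝕜 E]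

theorem exists_orthonormalBasis_apply_eq {ι : Type*} [Fintype ι]
    (hcard : finrank 𝕜 E = Fintype.card ι) {v : E} (hv : ‖v‖ = 1) (i : ι) :
    ∃ b : OrthonormalBasis ι 𝕜 E, b i = v := by
  have horth : Orthonormal 𝕜 (({i} : Set ι).domRestrict fun _ => v) :=
    ⟨fun _ => hv, fun j k hjk => absurd (Subtype.ext (j.2.trans k.2.symm)) hjk⟩
  obtain ⟨b, hb⟩ := horth.exists_orthonormalBasis_extension_of_card_eq hcard
  exact ⟨b, hb i rfl⟩

theorem exists_linearIsometryEquiv_apply_eq {v w : E} (hv : ‖v‖ = 1) (hw : ‖w‖ = 1) :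
    ∃ g : E ≃ₗᵢ[𝕜] E, g v = w := by
  have hpos : 0 < finrank 𝕜 E :=
    Module.finrank_pos_iff_exists_ne_zero.2 ⟨v, norm_ne_zero_iff.1 (by simp [hv])⟩
  let i : Fin (finrank 𝕜 E) := ⟨0, hpos⟩
  obtain ⟨b, hb⟩ := exists_orthonormalBasis_apply_eq (Fintype.card_fin _).symm hv i
  obtain ⟨b', hb'⟩ := exists_orthonormalBasis_apply_eq (Fintype.card_fin _).symm hw i
  refine ⟨b.equiv b' (Equiv.refl _), ?_⟩
  simpa [hb, hb'] using b.equiv_apply_basis b' (Equiv.refl _) i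

end Transitivity

theorem exists_unitary_pow_mul_conj_pow_eq_neg_one {a b : ℕ} (hab : a ≠ b) :
    ∃ w : unitary ℂ, (w : ℂ) ^ a * conj (w : ℂ) ^ b = -1 := by
  have hk : ((a : ℝ) - b) ≠ 0 := sub_ne_zero.2 (Nat.cast_injective.ne hab)
  set θ : ℝ := Real.pi / (a - b)
  have hw : Complex.exp (θ * Complex.I) ∈ unitary ℂ := by
    rw [Unitary.mem_iff_star_mul_self, RCLike.star_def, Complex.conj_mul',
      Complex.norm_exp_ofReal_mul_I, Complex.ofReal_one, one_pow]
  refine ⟨⟨_, hw⟩, ?_⟩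
  have harg : (a : ℂ) * (θ * Complex.I) + -(b * (θ * Complex.I)) = Real.pi * Complex.I := by
    have h : ((a : ℂ) - b) * θ = Real.pi := by
      rw [← Complex.ofReal_natCast, ← Complex.ofReal_natCast, ← Complex.ofReal_sub,
        ← Complex.ofReal_mul, mul_div_cancel₀ Real.pi hk]
    linear_combination Complex.I * h
  simp only [← Complex.exp_conj, map_mul, Complex.conj_ofReal, Complex.conj_I, mul_neg,
    ← Complex.exp_nat_mul, ← Complex.exp_add, harg, Complex.exp_pi_mul_I]

namespace EuclideanSpace

variable {ι : Type*} [Fintype ι]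

noncomputable def diagonalUnitary (d : ι → unitary ℂ) :
    EuclideanSpace ℂ ι ≃ₗᵢ[ℂ] EuclideanSpace ℂ ι :=
  LinearIsometryEquiv.piLpCongrRight 2 fun i => d i • LinearIsometryEquiv.refl ℂ ℂ

@[simp]
theorem diagonalUnitary_apply (d : ι → unitary ℂ) (z : EuclideanSpace ℂ ι) (i : ι) :
    diagonalUnitary d z i = d i * z i := rfl

noncomputable def monomial (α : ι → ℕ) (z : EuclideanSpace ℂ ι) : ℂ :=
  ∏ i, z i ^ α i

theorem continuous_monomial (α : ι → ℕ) : Continuous (monomial α) := by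
  unfold monomial
  fun_prop

theorem monomial_diagonalUnitary (d : ι → unitary ℂ) (α : ι → ℕ) (z : EuclideanSpace ℂ ι) :
    monomial α (diagonalUnitary d z) = (∏ i, (d i : ℂ) ^ α i) * monomial α z := by
  simp only [monomial, diagonalUnitary_apply, mul_pow, prod_mul_distrib]

theorem inner_pow_eq_sum [DecidableEq ι] (y z : EuclideanSpace ℂ ι) (n : ℕ) :
    ⟪y, z⟫ ^ n = ∑ α ∈ piAntidiag univ n,
      (Nat.multinomial univ α : ℂ) * (conj (monomial α y) * monomial α z) := by
  have hinner : ⟪y, z⟫ = ∑ i, conj (y i) * z i := by simp [PiLp.inner_apply, mul_comm]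
  simp [hinner, sum_pow_eq_sum_piAntidiag, monomial, map_prod, mul_pow, prod_mul_distrib]

end EuclideanSpace

open EuclideanSpace

theorem integral_comp_linearIsometryEquiv {𝕜 E F : Type*} [NormedField 𝕜]
    [NormedAddCommGroup E] [NormedSpace 𝕜 E] [MeasurableSpace E] [BorelSpace E]
    [NormedAddCommGroup F] [NormedSpace ℝ F] {ν : Measure E}
    (hinv : ∀ g : E ≃ₗᵢ[𝕜] E, ν.map g = ν) (g : E ≃ₗᵢ[𝕜] E) (f : E → F) :
    ∫ z, f (g z) ∂ν = ∫ z, f z ∂ν := by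
  conv_rhs => rw [← hinv g]
  exact (integral_map_equiv g.toHomeomorph.toMeasurableEquiv f).symm

theorem Continuous.integrable_of_ae_norm_eq_one {E F : Type*} [NormedAddCommGroup E]
    [ProperSpace E] [MeasurableSpace E] [OpensMeasurableSpace E] [NormedAddCommGroup F]
    {ν : Measure E} [IsFiniteMeasure ν] (hν : ∀ᵐ z ∂ν, ‖z‖ = 1) {f : E → F}
    (hf : Continuous f) : Integrable f ν := by
  obtain ⟨C, hC⟩ := (isCompact_sphere (0 : E) 1).exists_bound_of_continuousOn hf.continuousOn
  refine (integrable_const C).mono' hf.aestronglyMeasurable ?_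
  filter_upwards [hν] with z hz using hC z (by simpa using hz)

section InvariantMeasure

variable {ι : Type*} [Fintype ι]

noncomputable def mixedMoment (ν : Measure (EuclideanSpace ℂ ι)) (α β : ι → ℕ) : ℂ :=
  ∫ z, monomial α z * conj (monomial β z) ∂ν

variable {ν : Measure (EuclideanSpace ℂ ι)}

theorem mixedMoment_eq_zero_of_ne [DecidableEq ι]
    (hinv : ∀ g : EuclideanSpace ℂ ι ≃ₗᵢ[ℂ] EuclideanSpace ℂ ι, ν.map g = ν) {α β : ι → ℕ}
    (hαβ : α ≠ β) : mixedMoment ν α β = 0 := by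
  obtain ⟨j, hj⟩ := Function.ne_iff.1 hαβ
  obtain ⟨w, hw⟩ := exists_unitary_pow_mul_conj_pow_eq_neg_one hj
  set D := diagonalUnitary (Pi.mulSingle j w)
  have hphase (γ : ι → ℕ) :
      ∏ i, ((Pi.mulSingle j w : ι → unitary ℂ) i : ℂ) ^ γ i = (w : ℂ) ^ γ j := by
    rw [Fintype.prod_eq_single j fun i hi => by simp [Pi.mulSingle_eq_of_ne hi],
      Pi.mulSingle_eq_same]
  have hneg : mixedMoment ν α β = -mixedMoment ν α β :=
    calc mixedMoment ν α β
        = ∫ z, monomial α (D z) * conj (monomial β (D z)) ∂ν :=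
          (integral_comp_linearIsometryEquiv hinv D
            fun z => monomial α z * conj (monomial β z)).symm
      _ = ∫ z, -(monomial α z * conj (monomial β z)) ∂ν := by
          congr 1 with z
          rw [monomial_diagonalUnitary, monomial_diagonalUnitary, hphase, hphase, map_mul,
            map_pow, ← neg_one_mul, ← hw]
          ring
      _ = -mixedMoment ν α β := integral_neg _
  exact self_eq_neg.1 hneg

theorem integral_inner_pow_mul_inner_pow_eq_sum [DecidableEq ι] [IsFiniteMeasure ν]
    (hinv : ∀ g : EuclideanSpace ℂ ι ≃ₗᵢ[ℂ] EuclideanSpace ℂ ι, ν.map g = ν)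
    (hν : ∀ᵐ z ∂ν, ‖z‖ = 1) (n : ℕ) (x y : EuclideanSpace ℂ ι) :
    ∫ z, ⟪y, z⟫ ^ n * ⟪z, x⟫ ^ n ∂ν = ∑ α ∈ piAntidiag univ n,
      (Nat.multinomial univ α : ℂ) ^ 2 * mixedMoment ν α α *
        (conj (monomial α y) * monomial α x) := by
  have hint (α β : ι → ℕ) : Integrable (fun z => monomial α z * conj (monomial β z)) ν :=
    ((continuous_monomial α).mul (continuous_monomial β).star).integrable_of_ae_norm_eq_one hν
  have hexpand (z : EuclideanSpace ℂ ι) :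
      ⟪y, z⟫ ^ n * ⟪z, x⟫ ^ n = ∑ α ∈ piAntidiag univ n, ∑ β ∈ piAntidiag univ n,
        (Nat.multinomial univ α * Nat.multinomial univ β * conj (monomial α y) *
          monomial β x : ℂ) * (monomial α z * conj (monomial β z)) := by
    rw [inner_pow_eq_sum, inner_pow_eq_sum, sum_mul_sum]
    exact sum_congr rfl fun α _ => sum_congr rfl fun β _ => by ring
  simp_rw [hexpand]
  rw [integral_finsetSum _ fun α _ => integrable_finsetSum _ fun β _ => (hint α β).const_mul _]
  refine sum_congr rfl fun α hα => ?_
  rw [integral_finsetSum _ fun β _ => (hint α β).const_mul _, sum_eq_single_of_mem α hα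
    fun β _ hβα => by
      rw [integral_const_mul, ← mixedMoment, mixedMoment_eq_zero_of_ne hinv hβα.symm, mul_zero]]
  rw [integral_const_mul, mixedMoment]
  ring

theorem integral_inner_pow_mul_inner_pow_self
    (hinv : ∀ g : EuclideanSpace ℂ ι ≃ₗᵢ[ℂ] EuclideanSpace ℂ ι, ν.map g = ν)
    {v : EuclideanSpace ℂ ι} (hv : ‖v‖ = 1) (n : ℕ) (x : EuclideanSpace ℂ ι) :
    ∫ z, ⟪x, z⟫ ^ n * ⟪z, x⟫ ^ n ∂ν =
      (‖x‖ : ℂ) ^ (2 * n) * ∫ z, ⟪v, z⟫ ^ n * ⟪z, v⟫ ^ n ∂ν := by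
  obtain ⟨w, hw, hx⟩ : ∃ w : EuclideanSpace ℂ ι, ‖w‖ = 1 ∧ (‖x‖ : ℂ) • w = x := by
    by_cases hx : x = 0
    · exact ⟨v, hv, by simp [hx]⟩
    · exact ⟨(‖x‖⁻¹ : ℂ) • x, norm_smul_inv_norm hx, by simp [smul_smul, hx]⟩
  obtain ⟨g, hg⟩ := exists_linearIsometryEquiv_apply_eq (𝕜 := ℂ) hw hv
  calc ∫ z, ⟪x, z⟫ ^ n * ⟪z, x⟫ ^ n ∂ν
      = ∫ z, (‖x‖ : ℂ) ^ (2 * n) * (⟪v, g z⟫ ^ n * ⟪g z, v⟫ ^ n) ∂ν := by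
        congr 1 with z
        conv_lhs => rw [← hx, inner_smul_left, inner_smul_right, Complex.conj_ofReal,
          ← g.inner_map_map, ← g.inner_map_map z, hg]
        ring
    _ = (‖x‖ : ℂ) ^ (2 * n) * ∫ z, ⟪v, z⟫ ^ n * ⟪z, v⟫ ^ n ∂ν := by
        rw [integral_const_mul, integral_comp_linearIsometryEquiv hinv g
          fun z => ⟪v, z⟫ ^ n * ⟪z, v⟫ ^ n]

theorem multinomial_mul_mixedMoment_self [DecidableEq ι] [IsFiniteMeasure ν]
    (hinv : ∀ g : EuclideanSpace ℂ ι ≃ₗᵢ[ℂ] EuclideanSpace ℂ ι, ν.map g = ν)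
    (hν : ∀ᵐ z ∂ν, ‖z‖ = 1) {v : EuclideanSpace ℂ ι} (hv : ‖v‖ = 1) {n : ℕ} {α : ι → ℕ}
    (hα : α ∈ piAntidiag univ n) :
    Nat.multinomial univ α * mixedMoment ν α α = ∫ z, ⟪v, z⟫ ^ n * ⟪z, v⟫ ^ n ∂ν := by
  set c := ∫ z, ⟪v, z⟫ ^ n * ⟪z, v⟫ ^ n ∂ν
  suffices (Nat.multinomial univ α : ℂ) * (Nat.multinomial univ α * mixedMoment ν α α - c) = 0 by
    simpa [sub_eq_zero, (Nat.multinomial_pos _ _).ne'] using this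
  refine eq_zero_of_sum_mul_prod_natCast_pow_eq_zero (q := fun β =>
    (Nat.multinomial univ β : ℂ) * (Nat.multinomial univ β * mixedMoment ν β β - c))
    (fun r => ?_) hα
  -- `|x i|² = r i`, so both expansions of `∫ |⟪x, z⟫|²ⁿ dν` are polynomials in `r`
  set x : EuclideanSpace ℂ ι := WithLp.toLp 2 fun i => ((Real.sqrt (r i) : ℝ) : ℂ)
  have hmono (β : ι → ℕ) : conj (monomial β x) * monomial β x = ∏ i, (r i : ℂ) ^ β i := by
    simp only [monomial, map_prod, map_pow, ← prod_mul_distrib, ← mul_pow]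
    refine prod_congr rfl fun i _ => ?_
    simp [x, Complex.conj_ofReal, ← Complex.ofReal_mul, Real.mul_self_sqrt (Nat.cast_nonneg _)]
  have hnorm : (‖x‖ : ℂ) ^ (2 * n) = (∑ i, (r i : ℂ)) ^ n := by
    have hsq : ‖x‖ ^ 2 = ∑ i, (r i : ℝ) := by
      simp [x, EuclideanSpace.norm_sq_eq, Complex.norm_real, Real.sq_sqrt]
    rw [pow_mul]
    exact_mod_cast congrArg (· ^ n) hsq
  have h := (integral_inner_pow_mul_inner_pow_eq_sum hinv hν n x x).symm.trans
    (integral_inner_pow_mul_inner_pow_self hinv hv n x)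
  rw [hnorm, sum_pow_eq_sum_piAntidiag, sum_mul, ← sub_eq_zero, ← sum_sub_distrib] at h
  rw [← h]
  refine sum_congr rfl fun β _ => ?_
  rw [hmono]
  ring

theorem sum_multinomial_mul_mixedMoment_self [DecidableEq ι] [IsProbabilityMeasure ν]
    (hν : ∀ᵐ z ∂ν, ‖z‖ = 1) (n : ℕ) :
    ∑ α ∈ piAntidiag univ n, Nat.multinomial univ α * mixedMoment ν α α = 1 := by
  have hint (α : ι → ℕ) : Integrable (fun z => conj (monomial α z) * monomial α z) ν :=
    ((continuous_monomial α).star.mul (continuous_monomial α)).integrable_of_ae_norm_eq_one hν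
  calc ∑ α ∈ piAntidiag univ n, Nat.multinomial univ α * mixedMoment ν α α
      = ∑ α ∈ piAntidiag univ n,
          ∫ z, (Nat.multinomial univ α : ℂ) * (conj (monomial α z) * monomial α z) ∂ν := by
        refine sum_congr rfl fun α _ => ?_
        simp_rw [mixedMoment, ← integral_const_mul, mul_comm (monomial α _)]
    _ = ∫ z, ⟪z, z⟫ ^ n ∂ν := by
        simp_rw [inner_pow_eq_sum]
        exact (integral_finsetSum _ fun α _ => (hint α).const_mul _).symm
    _ = ∫ _, 1 ∂ν := by
        refine integral_congr_ae ?_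
        filter_upwards [hν] with z hz
        rw [inner_self_eq_norm_sq_to_K, hz]
        simp
    _ = 1 := by simp

theorem card_piAntidiag_univ [DecidableEq ι] (n : ℕ) :
    #(piAntidiag univ n : Finset (ι → ℕ)) = (n + Fintype.card ι - 1).choose n := by
  rw [← map_sym_eq_piAntidiag, card_map, sym_univ, card_univ, Sym.card_sym_eq_choose,
    Nat.add_comm]

theorem choose_mul_integral_inner_pow_mul_inner_pow [IsProbabilityMeasure ν]
    (hinv : ∀ g : EuclideanSpace ℂ ι ≃ₗᵢ[ℂ] EuclideanSpace ℂ ι, ν.map g = ν)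
    (hν : ∀ᵐ z ∂ν, ‖z‖ = 1) (n : ℕ) (x y : EuclideanSpace ℂ ι) :
    ((n + Fintype.card ι - 1).choose n : ℂ) * ∫ z, ⟪y, z⟫ ^ n * ⟪z, x⟫ ^ n ∂ν = ⟪y, x⟫ ^ n := by
  classical
  obtain ⟨v, hv⟩ := hν.exists
  set c := ∫ z, ⟪v, z⟫ ^ n * ⟪z, v⟫ ^ n ∂ν
  have hdiag : ∀ α ∈ piAntidiag univ n, Nat.multinomial univ α * mixedMoment ν α α = c :=
    fun α hα => multinomial_mul_mixedMoment_self hinv hν hv hα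
  have hc : ((n + Fintype.card ι - 1).choose n : ℂ) * c = 1 := by
    rw [← sum_multinomial_mul_mixedMoment_self hν n, sum_congr rfl hdiag, sum_const,
      card_piAntidiag_univ, nsmul_eq_mul]
  rw [integral_inner_pow_mul_inner_pow_eq_sum hinv hν, inner_pow_eq_sum, mul_sum]
  refine sum_congr rfl fun α hα => ?_
  linear_combination (Nat.multinomial univ α * (conj (monomial α y) * monomial α x) : ℂ) *
    (((n + Fintype.card ι - 1).choose n : ℂ) * hdiag α hα + hc)

end InvariantMeasure

section UnitaryGroup

variable {ι : Type*} [Fintype ι] [DecidableEq ι]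

theorem LinearIsometryEquiv.exists_toEuclideanLin_eq
    (g : EuclideanSpace ℂ ι ≃ₗᵢ[ℂ] EuclideanSpace ℂ ι) :
    ∃ u : Matrix.unitaryGroup ι ℂ, Matrix.toEuclideanLin (u : Matrix ι ι ℂ) = g.toLinearMap := by
  refine ⟨⟨_, g.toMatrix_mem_unitaryGroup (EuclideanSpace.basisFun ι ℂ)
    (EuclideanSpace.basisFun ι ℂ)⟩, ?_⟩
  rw [Matrix.toEuclideanLin_eq_toLin_orthonormal]
  exact Matrix.toLin_toMatrix _ _ _

noncomputable def unitaryOrbit (x : EuclideanSpace ℂ ι) (u : Matrix.unitaryGroup ι ℂ) :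
    EuclideanSpace ℂ ι :=
  Matrix.toEuclideanLin (u : Matrix ι ι ℂ) x

theorem norm_unitaryOrbit (x : EuclideanSpace ℂ ι) (u : Matrix.unitaryGroup ι ℂ) :
    ‖unitaryOrbit x u‖ = ‖x‖ :=
  Unitary.norm_map ⟨Matrix.toEuclideanCLM (n := ι) (𝕜 := ℂ) u, Unitary.map_mem _ u.2⟩ x

theorem continuous_unitaryOrbit (x : EuclideanSpace ℂ ι) : Continuous (unitaryOrbit x) := by
  have : unitaryOrbit x =
      fun u : Matrix.unitaryGroup ι ℂ => WithLp.toLp 2 (Matrix.mulVec (u : Matrix ι ι ℂ) x.ofLp) :=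
    funext fun u => Matrix.toLpLin_apply _ _ _ _
  rw [this]
  exact (PiLp.continuous_toLp 2 _).comp (continuous_subtype_val.matrix_mulVec continuous_const)

theorem map_linearIsometryEquiv_map_unitaryOrbit [MeasurableSpace (Matrix.unitaryGroup ι ℂ)]
    [BorelSpace (Matrix.unitaryGroup ι ℂ)] {μ : Measure (Matrix.unitaryGroup ι ℂ)}
    (hinv : ∀ g : Matrix.unitaryGroup ι ℂ, μ.map (fun u => g * u) = μ) (x : EuclideanSpace ℂ ι)
    (g : EuclideanSpace ℂ ι ≃ₗᵢ[ℂ] EuclideanSpace ℂ ι) :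
    (μ.map (unitaryOrbit x)).map g = μ.map (unitaryOrbit x) := by
  obtain ⟨U, hU⟩ := g.exists_toEuclideanLin_eq
  have hcomp : g ∘ unitaryOrbit x = unitaryOrbit x ∘ fun u => U * u := by
    funext u
    simp [unitaryOrbit, hU]
  have hmul : Continuous fun u : Matrix.unitaryGroup ι ℂ => U * u := by fun_prop
  rw [Measure.map_map g.continuous.measurable (continuous_unitaryOrbit x).measurable, hcomp,
    ← Measure.map_map (continuous_unitaryOrbit x).measurable hmul.measurable, hinv]

end UnitaryGroup

/-- for the Haar probability measure `μ` on `U(m)` and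
`ψ_ζ(u) = ⟨(u e₁)^{⊗n} ∣ ψ⟩` with `ψ ∈ (ℂᵐ)^{⊙n}`:
`C(n+m-1,n) ∫ φ_ζ · conj(ψ_ζ) dμ = ⟨ψ ∣ φ⟩`
(paper's `⟨a∣b⟩` is Mathlib's `inner b a`). -/
theorem averaged_inner_product_formula (m n : ℕ) (hm : 0 < m) (T : Type)
    [NormedAddCommGroup T] [InnerProductSpace ℂ T]
    (M : SymPowModel (EuclideanSpace ℂ (Fin m)) n T)
    [MeasurableSpace (Matrix.unitaryGroup (Fin m) ℂ)]
    [BorelSpace (Matrix.unitaryGroup (Fin m) ℂ)]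
    (μ : Measure (Matrix.unitaryGroup (Fin m) ℂ)) [IsProbabilityMeasure μ]
    (hinv : ∀ g : Matrix.unitaryGroup (Fin m) ℂ, μ.map (fun u => g * u) = μ)
    (ψ φ : T) :
    (((n + m - 1).choose n : ℕ) : ℂ) *
        ∫ u : Matrix.unitaryGroup (Fin m) ℂ,
          (inner ℂ φ (M.tpow (Matrix.toEuclideanLin (u : Matrix (Fin m) (Fin m) ℂ)
              (EuclideanSpace.single (⟨0, hm⟩ : Fin m) (1 : ℂ)))) : ℂ) *
            (starRingEnd ℂ)
              (inner ℂ ψ (M.tpow (Matrix.toEuclideanLin (u : Matrix (Fin m) (Fin m) ℂ)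
                (EuclideanSpace.single (⟨0, hm⟩ : Fin m) (1 : ℂ)))) : ℂ) ∂μ =
      (inner ℂ φ ψ : ℂ) := by
  set e₁ := EuclideanSpace.single (⟨0, hm⟩ : Fin m) (1 : ℂ)
  have hζ := continuous_unitaryOrbit e₁
  have : IsProbabilityMeasure (μ.map (unitaryOrbit e₁)) :=
    Measure.isProbabilityMeasure_map hζ.aemeasurable
  have hsphere : ∀ᵐ z ∂μ.map (unitaryOrbit e₁), ‖z‖ = 1 :=
    (ae_map_iff hζ.aemeasurable (measurableSet_eq_fun measurable_norm measurable_const)).2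
      (ae_of_all _ fun u => by simp [norm_unitaryOrbit, e₁])
  have hkernel (x y : EuclideanSpace ℂ (Fin m)) :
      (((n + m - 1).choose n : ℕ) : ℝ) * ∫ z, ⟪y, z⟫ ^ n * ⟪z, x⟫ ^ n ∂μ.map (unitaryOrbit e₁) =
        ⟪y, x⟫ ^ n := by
    simpa using choose_mul_integral_inner_pow_mul_inner_pow
      (map_linearIsometryEquiv_map_unitaryOrbit hinv e₁) hsphere n x y
  have key := M.mul_integral_inner_tpow_mul_inner_tpow_eq_inner hsphere hkernel φ ψ
  have hcont : Continuous fun z => ⟪φ, M.tpow z⟫ * ⟪M.tpow z, ψ⟫ := by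
    have := M.continuous_tpow
    fun_prop
  rw [integral_map hζ.aemeasurable hcont.aestronglyMeasurable] at key
  simpa [unitaryOrbit, inner_conj_symm] using key
end
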